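/- arXiv:1809.01313 — 2 statements merged into one kernel-verified Lean document; each statement's English description precedes it below -/
import Mathlib

section
/- If φ and ψ are analytic and non-vanishing on the unit disk, then the function z ↦ log(|φ(z)| + |ψ(z)|) is subharmonic on the unit disk. -/
/-!
Since `φ` and `ψ` have no zeros, `a = log ‖φ‖` and `b = log ‖ψ‖` are harmonic, and
`log (‖φ‖ + ‖ψ‖) = a + softplus (b - a)` with `softplus t = log (1 + exp t)` convex.
On each circle the average of `a` is its value at the centre (mean value property), and by
Jensen's inequality the average of `softplus (b - a)` is at least `softplus` of the average of
`b - a`, which is again the value at the centre.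
-/

open Complex MeasureTheory Real

/-- A function is subharmonic on a set if it is upper semicontinuous there and satisfies the
sub-mean value inequality on every circle whose closed disk lies in the set. -/
def SubharmonicOn (u : ℂ → ℝ) (s : Set ℂ) : Prop :=
  UpperSemicontinuousOn u s ∧
    ∀ z ∈ s, ∀ ρ : ℝ, 0 < ρ → Metric.closedBall z ρ ⊆ s →
      u z ≤ (2 * π)⁻¹ * ∫ θ in (0:ℝ)..(2 * π), u (z + (ρ : ℂ) * Complex.exp (θ * Complex.I))

open Set Metric InnerProductSpace

namespace Real

noncomputable def softplus (t : ℝ) : ℝ := log (1 + exp t)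

lemma hasDerivAt_softplus (t : ℝ) : HasDerivAt softplus (sigmoid t) t := by
  refine (((hasDerivAt_exp t).const_add 1).log (by positivity)).congr_deriv ?_
  rw [sigmoid_def, exp_neg]
  field_simp
  ring

lemma continuous_softplus : Continuous softplus :=
  continuous_iff_continuousAt.2 fun t => (hasDerivAt_softplus t).continuousAt

lemma convexOn_softplus : ConvexOn ℝ univ softplus := by
  refine Monotone.convexOn_univ_of_deriv (fun t => (hasDerivAt_softplus t).differentiableAt) ?_
  rw [funext fun t => (hasDerivAt_softplus t).deriv]
  exact sigmoid_monotone

lemma log_exp_add_exp (a b : ℝ) : log (exp a + exp b) = a + softplus (b - a) := by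
  rw [softplus, ← log_exp a, ← log_mul (exp_ne_zero a) (by positivity), mul_add, mul_one,
    ← exp_add, log_exp, add_sub_cancel]

end Real

theorem ConvexOn.map_circleAverage_le {g : ℝ → ℝ} (hg : ConvexOn ℝ univ g) {f : ℂ → ℝ} {c : ℂ}
    {R : ℝ} (hf : CircleIntegrable f c R) (hgf : CircleIntegrable (g ∘ f) c R) :
    g (circleAverage f c R) ≤ circleAverage (g ∘ f) c R := by
  simp only [circleAverage_eq_intervalAverage]
  exact hg.map_set_average_le (hg.continuousOn isOpen_univ) isClosed_univ (by simp)
    (by simp [ENNReal.mul_eq_top]) (by simp) hf.def' hgf.def'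

namespace InnerProductSpace.HarmonicOnNhd

variable {f : ℂ → ℝ} {c : ℂ} {R : ℝ}

theorem circleIntegrable_comp {g : ℝ → ℝ} (hg : Continuous g)
    (hf : HarmonicOnNhd f (closedBall c |R|)) : CircleIntegrable (g ∘ f) c R :=
  (hg.comp_continuousOn (hf.continuousOn.mono sphere_subset_closedBall)).circleIntegrable'

theorem map_le_circleAverage_comp {g : ℝ → ℝ} (hg : ConvexOn ℝ univ g)
    (hf : HarmonicOnNhd f (closedBall c |R|)) : g (f c) ≤ circleAverage (g ∘ f) c R := by
  rw [← hf.circleAverage_eq]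
  exact hg.map_circleAverage_le (hf.circleIntegrable_comp continuous_id)
    (hf.circleIntegrable_comp (continuousOn_univ.1 (hg.continuousOn isOpen_univ)))

end InnerProductSpace.HarmonicOnNhd

theorem le_circleAverage_log_norm_add_norm {φ ψ : ℂ → ℂ} {c : ℂ} {R : ℝ}
    (hφ : AnalyticOnNhd ℂ φ (closedBall c |R|)) (hψ : AnalyticOnNhd ℂ ψ (closedBall c |R|))
    (hφ0 : ∀ z ∈ closedBall c |R|, φ z ≠ 0) (hψ0 : ∀ z ∈ closedBall c |R|, ψ z ≠ 0) :
    Real.log (‖φ c‖ + ‖ψ c‖) ≤ circleAverage (fun z => Real.log (‖φ z‖ + ‖ψ z‖)) c R := by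
  set a : ℂ → ℝ := fun z => log ‖φ z‖
  set b : ℂ → ℝ := fun z => log ‖ψ z‖
  have ha : HarmonicOnNhd a (closedBall c |R|) := fun z hz =>
    (hφ z hz).harmonicAt_log_norm (hφ0 z hz)
  have hb : HarmonicOnNhd b (closedBall c |R|) := fun z hz =>
    (hψ z hz).harmonicAt_log_norm (hψ0 z hz)
  have hsplit : EqOn (fun z => Real.log (‖φ z‖ + ‖ψ z‖))
      (a + softplus ∘ (b - a)) (closedBall c |R|) := by
    intro z hz
    simp only [a, b, Pi.add_apply, Function.comp_apply, Pi.sub_apply]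
    rw [← Real.log_exp_add_exp, Real.exp_log (norm_pos_iff.2 (hφ0 z hz)),
      Real.exp_log (norm_pos_iff.2 (hψ0 z hz))]
  have hsoft := (hb.sub ha).map_le_circleAverage_comp convexOn_softplus
  refine (hsplit (mem_closedBall_self (abs_nonneg R))).trans_le ?_
  rw [circleAverage_congr_sphere (hsplit.mono sphere_subset_closedBall), circleAverage_add,
    ha.circleAverage_eq]
  · exact add_le_add_right hsoft _
  · exact ha.circleIntegrable_comp continuous_id
  · exact (hb.sub ha).circleIntegrable_comp continuous_softplus

theorem subharmonicOn_of_continuousOn {u : ℂ → ℝ} {s : Set ℂ} (hu : ContinuousOn u s)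
    (h : ∀ z ρ, 0 < ρ → closedBall z ρ ⊆ s → u z ≤ circleAverage u z ρ) : SubharmonicOn u s :=
  ⟨hu.upperSemicontinuousOn, fun z _ ρ hρ hsub => h z ρ hρ hsub⟩

/-- If `φ` and `ψ` are analytic and non-vanishing on the unit disk, then `log (|φ| + |ψ|)` is
subharmonic on the unit disk. -/
theorem log_abs_add_abs_subharmonic (φ ψ : ℂ → ℂ)
    (hφ : AnalyticOn ℂ φ (Metric.ball 0 1)) (hψ : AnalyticOn ℂ ψ (Metric.ball 0 1))
    (hφ0 : ∀ z ∈ Metric.ball (0:ℂ) 1, φ z ≠ 0) (hψ0 : ∀ z ∈ Metric.ball (0:ℂ) 1, ψ z ≠ 0) :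
    SubharmonicOn (fun z => Real.log (‖φ z‖ + ‖ψ z‖)) (Metric.ball 0 1) := by
  rw [isOpen_ball.analyticOn_iff_analyticOnNhd] at hφ hψ
  refine subharmonicOn_of_continuousOn ?_ fun z ρ hρ hsub => ?_
  · refine (hφ.continuousOn.norm.add hψ.continuousOn.norm).log fun z hz => ?_
    exact (add_pos_of_pos_of_nonneg (norm_pos_iff.2 (hφ0 z hz)) (norm_nonneg _)).ne'
  · rw [← abs_of_pos hρ] at hsub
    exact le_circleAverage_log_norm_add_norm (hφ.mono hsub) (hψ.mono hsub)
      (fun w hw => hφ0 w (hsub hw)) (fun w hw => hψ0 w (hsub hw))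
end

section
/- As r → 1⁻, the ratio (∫_{-1}^{1} |f_r(x)|^p dx) / (∫₀^{2π} |f_r(e^{iθ})|^p dθ) tends to (1/2) cos^{-p}(π/(2p)), where f_r(z) = Re(((1+rz)/(1−rz))^{1/p}) and p > 1. -/
open Complex Real Filter

open Topology Asymptotics

/-!
Write `w = (1 + r z)/(1 - r z)`. On the segment `w > 0`, so `|f_r(x)|^p = w`, whose integral is
`(2/r) log((1+r)/(1-r)) - 2`.

On the circle `|f_r|^p = |w| |cos(arg w / p)|^p` with `|arg w| ≤ π/2`, and
`|cos^p(φ/p) - cos^p(π/(2p))| ≤ π/2 - |φ| ≤ (π/2) cos φ`; hence `|f_r|^p` is within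
`(π/2) Re w` of `cos^p(π/(2p)) |w|`, and `Re w` (the Poisson kernel) has integral `2π`.
Since `| |w| - 2/|1 - rz| | ≤ 1`, the denominator is `2 cos^p(π/(2p)) ∫ dθ/|1 - re^{iθ}| + O(1)`.
Over `[-π, π]` the weight `cos(θ/2)` turns `1/|1 - re^{iθ}|` into the derivative of
`arsinh(2√r sin(θ/2)/(1-r))/√r`, and `1 - cos(θ/2) ≤ |sin(θ/2)|` bounds the rest, so
`∫ dθ/|1 - re^{iθ}| = (2/√r) log((1+r)/(1-r)) + O(1)`.
Both integrals are thus multiples of `log((1+r)/(1-r)) → ∞` up to bounded errors, with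
coefficients tending to `2` and `4 cos^p(π/(2p))`.
-/

theorem tendsto_div_of_isBigO_sub_mul {α : Type*} {l : Filter α} {f a L : α → ℝ} {A : ℝ}
    (hL : Tendsto L l atTop) (ha : Tendsto a l (𝓝 A))
    (hf : (fun x => f x - a x * L x) =O[l] fun _ => (1 : ℝ)) :
    Tendsto (fun x => f x / L x) l (𝓝 A) := by
  have hL' : (fun _ => (1 : ℝ)) =o[l] L :=
    (isLittleO_one_left_iff ℝ).2 (tendsto_abs_atTop_atTop.comp hL)
  have := ha.add (hf.trans_isLittleO hL').tendsto_div_nhds_zero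
  rw [add_zero] at this
  refine this.congr' ?_
  filter_upwards [hL.eventually_ne_atTop 0] with x hx
  field_simp
  ring

theorem abs_rpow_sub_rpow_le {p a b : ℝ} (hp : 1 ≤ p) (ha : a ∈ Set.Icc (0 : ℝ) 1)
    (hb : b ∈ Set.Icc (0 : ℝ) 1) : |a ^ p - b ^ p| ≤ p * |a - b| := by
  have hderiv : ∀ x ∈ Set.Icc (0 : ℝ) 1, HasDerivWithinAt (fun x => x ^ p)
      (p * x ^ (p - 1)) (Set.Icc 0 1) x :=
    fun x _ => (hasDerivAt_rpow_const (Or.inr hp)).hasDerivWithinAt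
  have hbound : ∀ x ∈ Set.Icc (0 : ℝ) 1, ‖p * x ^ (p - 1)‖ ≤ p := fun x hx => by
    rw [norm_mul, Real.norm_of_nonneg (by linarith), Real.norm_of_nonneg (rpow_nonneg hx.1 _)]
    exact mul_le_of_le_one_right (by linarith) (rpow_le_one hx.1 hx.2 (by linarith))
  simpa using
    (convex_Icc (0 : ℝ) 1).norm_image_sub_le_of_norm_hasDerivWithin_le hderiv hbound hb ha

theorem pi_div_two_sub_le_mul_cos {x : ℝ} (h0 : 0 ≤ x) (h1 : x ≤ π / 2) :
    π / 2 - x ≤ π / 2 * Real.cos x := by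
  have := mul_le_sin (x := π / 2 - x) (by linarith) (by linarith)
  rw [Real.sin_pi_div_two_sub] at this
  have hπ := pi_pos
  calc π / 2 - x = π / 2 * (2 / π * (π / 2 - x)) := by field_simp
    _ ≤ π / 2 * Real.cos x := by gcongr

theorem one_sub_cos_le_abs_sin {x : ℝ} (hx : |x| ≤ π / 2) :
    1 - Real.cos x ≤ |Real.sin x| := by
  have hc : 0 ≤ Real.cos x := Real.cos_nonneg_of_mem_Icc (abs_le.1 hx)
  have hc1 := Real.cos_le_one x
  rw [← Real.sqrt_sq_eq_abs, Real.le_sqrt (by linarith) (sq_nonneg _), Real.sin_sq]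
  nlinarith

theorem abs_abs_cos_div_rpow_sub_le {p φ : ℝ} (hp : 1 ≤ p) (hφ : |φ| ≤ π / 2) :
    |(|Real.cos (φ / p)|) ^ p - Real.cos (π / (2 * p)) ^ p| ≤ π / 2 * Real.cos φ := by
  have hp0 : 0 < p := by linarith
  have hmem : ∀ x, 0 ≤ x → x ≤ π / 2 → Real.cos (x / p) ∈ Set.Icc (0 : ℝ) 1 := fun x h0 h1 =>
    ⟨cos_nonneg_of_mem_Icc ⟨by linarith [pi_pos, div_nonneg h0 hp0.le],
      (div_le_self (by linarith) hp).trans h1⟩, cos_le_one _⟩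
  have habs : |Real.cos (φ / p)| = Real.cos (|φ| / p) := by
    rw [← cos_abs, abs_div, abs_of_pos hp0]
    exact abs_of_nonneg (hmem _ (abs_nonneg φ) hφ).1
  rw [habs, ← cos_abs φ, show π / (2 * p) = π / 2 / p by ring]
  calc |Real.cos (|φ| / p) ^ p - Real.cos (π / 2 / p) ^ p|
      ≤ p * |Real.cos (|φ| / p) - Real.cos (π / 2 / p)| :=
        abs_rpow_sub_rpow_le hp (hmem _ (abs_nonneg φ) hφ) (hmem _ pi_div_two_pos.le le_rfl)
    _ ≤ p * |(|φ|) / p - π / 2 / p| :=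
        mul_le_mul_of_nonneg_left (abs_cos_sub_cos_le _ _) hp0.le
    _ = π / 2 - |φ| := by
        rw [abs_sub_comm, ← sub_div, abs_div, abs_of_pos hp0, abs_of_nonneg (by linarith)]
        field_simp
    _ ≤ π / 2 * Real.cos |φ| := pi_div_two_sub_le_mul_cos (abs_nonneg φ) hφ

theorem cos_pi_div_two_mul_nonneg {p : ℝ} (hp : 1 ≤ p) : 0 ≤ Real.cos (π / (2 * p)) :=
  Real.cos_nonneg_of_mem_Icc
    ⟨by linarith [pi_pos, div_nonneg pi_pos.le (by linarith : (0 : ℝ) ≤ 2 * p)],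
      div_le_div_of_nonneg_left pi_pos.le two_pos (by linarith)⟩

theorem cos_pi_div_two_mul_pos {p : ℝ} (hp : 1 < p) : 0 < Real.cos (π / (2 * p)) :=
  Real.cos_pos_of_mem_Ioo
    ⟨by linarith [pi_pos, div_pos pi_pos (by linarith : (0 : ℝ) < 2 * p)],
      div_lt_div_of_pos_left pi_pos two_pos (by linarith)⟩

theorem abs_re_cpow_one_div_rpow (w : ℂ) {p : ℝ} (hp : 0 < p) :
    |(w ^ ((1 / p : ℝ) : ℂ)).re| ^ p = ‖w‖ * |Real.cos (arg w / p)| ^ p := by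
  rw [cpow_ofReal_re, abs_mul, abs_of_nonneg (rpow_nonneg (norm_nonneg _) _),
    mul_rpow (rpow_nonneg (norm_nonneg _) _) (abs_nonneg _), ← rpow_mul (norm_nonneg _),
    one_div_mul_cancel hp.ne', rpow_one, mul_one_div]

theorem abs_abs_re_cpow_one_div_rpow_sub_le {w : ℂ} (hw : 0 ≤ w.re) {p : ℝ} (hp : 1 ≤ p) :
    |(|(w ^ ((1 / p : ℝ) : ℂ)).re|) ^ p - Real.cos (π / (2 * p)) ^ p * ‖w‖|
      ≤ π / 2 * w.re := by
  rw [abs_re_cpow_one_div_rpow w (by linarith), ← norm_mul_cos_arg, mul_comm ‖w‖, ← sub_mul,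
    abs_mul, abs_of_nonneg (norm_nonneg w), mul_left_comm, mul_comm ‖w‖]
  exact mul_le_mul_of_nonneg_right
    (abs_abs_cos_div_rpow_sub_le hp (abs_arg_le_pi_div_two_iff.2 hw)) (norm_nonneg w)

theorem re_one_add_div_one_sub (u : ℂ) :
    ((1 + u) / (1 - u)).re = (1 - ‖u‖ ^ 2) / ‖1 - u‖ ^ 2 := by
  rw [div_re, normSq_eq_norm_sq, ← add_div, ← normSq_eq_norm_sq u, normSq_apply]
  congr 1
  simp only [add_re, sub_re, one_re, add_im, sub_im, one_im]
  ring

theorem one_sub_ne_zero_of_norm_lt_one {u : ℂ} (hu : ‖u‖ < 1) : 1 - u ≠ 0 :=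
  sub_ne_zero.2 fun h => by simp [← h] at hu

theorem re_one_add_div_one_sub_pos {u : ℂ} (hu : ‖u‖ < 1) : 0 < ((1 + u) / (1 - u)).re := by
  rw [re_one_add_div_one_sub]
  have := norm_pos_iff.2 (one_sub_ne_zero_of_norm_lt_one hu)
  exact div_pos (by nlinarith [norm_nonneg u]) (by positivity)

theorem abs_norm_one_add_div_one_sub_sub_le (u : ℂ) :
    |‖(1 + u) / (1 - u)‖ - 2 / ‖1 - u‖| ≤ 1 := by
  rcases eq_or_ne u 1 with rfl | hu
  · simp
  have h : 0 < ‖1 - u‖ := norm_pos_iff.2 (sub_ne_zero.2 hu.symm)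
  rw [norm_div, ← sub_div, abs_div, abs_of_pos h, div_le_one h]
  have := abs_norm_sub_norm_le (1 + u) 2
  rwa [show 1 + u - 2 = -(1 - u) by ring, norm_neg, show ‖(2 : ℂ)‖ = 2 by norm_num] at this

theorem abs_abs_re_one_add_div_one_sub_cpow_rpow_sub_le {u : ℂ} (hu : ‖u‖ ≤ 1) {p : ℝ}
    (hp : 1 ≤ p) :
    |(|(((1 + u) / (1 - u)) ^ ((1 / p : ℝ) : ℂ)).re|) ^ p
        - 2 * Real.cos (π / (2 * p)) ^ p / ‖1 - u‖|
      ≤ π / 2 * ((1 + u) / (1 - u)).re + Real.cos (π / (2 * p)) ^ p := by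
  set K := Real.cos (π / (2 * p)) ^ p
  have hK : 0 ≤ K := rpow_nonneg (cos_pi_div_two_mul_nonneg hp) _
  have hre : 0 ≤ ((1 + u) / (1 - u)).re := by
    rw [re_one_add_div_one_sub]
    exact div_nonneg (by nlinarith [norm_nonneg u]) (sq_nonneg _)
  have h2 : |K * ‖(1 + u) / (1 - u)‖ - 2 * K / ‖1 - u‖| ≤ K := by
    rw [mul_div_assoc, mul_div_left_comm, ← mul_sub, abs_mul, abs_of_nonneg hK]
    exact mul_le_of_le_one_right hK (abs_norm_one_add_div_one_sub_sub_le u)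
  exact (abs_sub_le _ _ _).trans
    (add_le_add (abs_abs_re_cpow_one_div_rpow_sub_le hre hp) h2)

theorem integral_re_one_add_div_one_sub_mul_exp {r : ℝ} (hr : |r| < 1) :
    ∫ θ in (0 : ℝ)..2 * π, ((1 + r * exp (θ * I)) / (1 - r * exp (θ * I))).re = 2 * π := by
  set f : ℂ → ℂ := fun z => (1 + z) / (1 - z)
  have hdiff : DifferentiableOn ℂ f (Metric.ball 0 1) := fun z hz =>
    ((differentiableAt_const _).add differentiableAt_id |>.div
      ((differentiableAt_const _).sub differentiableAt_id)
      (sub_ne_zero.2 fun h => by simp [← h] at hz)).differentiableWithinAt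
  have hf : DiffContOnCl ℂ f (Metric.ball 0 |r|) :=
    hdiff.diffContOnCl_ball (Metric.closedBall_subset_ball hr)
  have hmean : circleAverage (Complex.reCLM ∘ f) 0 r = 1 := by
    rw [Complex.reCLM.circleAverage_comp_comm
      (hf.continuousOn_ball.mono Metric.sphere_subset_closedBall |>.circleIntegrable'),
      hf.circleAverage]
    simp [f]
  rw [circleAverage_def, smul_eq_mul, inv_mul_eq_iff_eq_mul₀ (by positivity), mul_one]
    at hmean
  simpa [f, circleMap] using hmean

theorem norm_ofReal_mul_exp_mul_I_lt_one {r : ℝ} (hr : |r| < 1) (θ : ℝ) :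
    ‖(r : ℂ) * exp (θ * I)‖ < 1 := by
  simpa [norm_exp_ofReal_mul_I] using hr

theorem norm_one_sub_ofReal_mul_exp {r : ℝ} (hr : 0 ≤ r) (θ : ℝ) :
    ‖1 - r * exp (θ * I)‖ = √((1 - r) ^ 2 + (2 * √r * Real.sin (θ / 2)) ^ 2) := by
  rw [← Real.sqrt_sq (norm_nonneg _), ← normSq_eq_norm_sq]
  congr 1
  have hθ : θ = 2 * (θ / 2) := by ring
  rw [normSq_apply, mul_pow, mul_pow, Real.sq_sqrt hr]
  simp only [sub_re, one_re, mul_re, ofReal_re, ofReal_im, sub_im, one_im, mul_im,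
    exp_ofReal_mul_I_re, exp_ofReal_mul_I_im, zero_mul, sub_zero, add_zero, zero_sub]
  rw [hθ, Real.cos_two_mul, Real.sin_two_mul, ← hθ]
  linear_combination (4 * r ^ 2 * Real.cos (θ / 2) ^ 2 - 4 * r) * Real.cos_sq' (θ / 2)

theorem integral_cos_half_div_sqrt {a c : ℝ} (ha : 0 < a) (hc : 0 < c) :
    ∫ θ in (-π)..π, Real.cos (θ / 2) / √(a ^ 2 + (c * Real.sin (θ / 2)) ^ 2)
      = 4 / c * arsinh (c / a) := by
  have hderiv : ∀ θ ∈ Set.uIcc (-π) π,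
      HasDerivAt (fun θ => 2 / c * arsinh (c * Real.sin (θ / 2) / a))
        (Real.cos (θ / 2) / √(a ^ 2 + (c * Real.sin (θ / 2)) ^ 2)) θ := by
    intro θ _
    refine ((((((hasDerivAt_id' θ).div_const 2).sin).const_mul c).div_const a).arsinh.const_mul
      (2 / c)).congr_deriv ?_
    have hpos : 0 < a ^ 2 + (c * Real.sin (θ / 2)) ^ 2 := by positivity
    rw [show 1 + (c * Real.sin (θ / 2) / a) ^ 2
          = (a ^ 2 + (c * Real.sin (θ / 2)) ^ 2) / a ^ 2 by field_simp,
      Real.sqrt_div' _ (sq_nonneg a), Real.sqrt_sq ha.le, smul_eq_mul]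
    field_simp
  rw [intervalIntegral.integral_eq_sub_of_hasDerivAt hderiv
    (Continuous.intervalIntegrable (Continuous.div (by fun_prop) (by fun_prop)
      fun θ => (Real.sqrt_pos.2 (by positivity)).ne') _ _),
    neg_div, Real.sin_neg, Real.sin_pi_div_two, mul_neg, mul_one, neg_div, arsinh_neg]
  ring

theorem integral_inv_norm_one_sub_mul_exp_sub_mem {r : ℝ} (hr0 : 0 < r) (hr1 : r < 1) :
    (∫ θ in (0 : ℝ)..2 * π, ‖1 - r * exp (θ * I)‖⁻¹) - 2 / √r * arsinh (2 * √r / (1 - r))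
      ∈ Set.Icc 0 (π / √r) := by
  set N : ℝ → ℝ := fun θ => ‖1 - r * exp (θ * I)‖
  have hN : ∀ θ, N θ = √((1 - r) ^ 2 + (2 * √r * Real.sin (θ / 2)) ^ 2) :=
    norm_one_sub_ofReal_mul_exp hr0.le
  have hNpos : ∀ θ, 0 < N θ := fun θ => by rw [hN]; positivity
  have hNc : Continuous N := by fun_prop
  have hperiodic : Function.Periodic (fun θ => (N θ)⁻¹) (2 * π) := fun θ => by
    simp [N, add_mul, Complex.exp_add]
  have hJ : ∫ θ in (-π)..π, Real.cos (θ / 2) / N θ = 2 / √r * arsinh (2 * √r / (1 - r)) := by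
    simp_rw [hN]
    rw [integral_cos_half_div_sqrt (by linarith) (by positivity)]
    ring
  have hsplit : (∫ θ in (0 : ℝ)..2 * π, (N θ)⁻¹) - ∫ θ in (-π)..π, Real.cos (θ / 2) / N θ
      = ∫ θ in (-π)..π, (1 - Real.cos (θ / 2)) / N θ := by
    have h := hperiodic.intervalIntegral_add_eq 0 (-π)
    rw [zero_add, show -π + 2 * π = π by ring] at h
    have hc : Continuous fun θ : ℝ => Real.cos (θ / 2) / N θ :=
      (by fun_prop : Continuous fun θ : ℝ => Real.cos (θ / 2)).div hNc fun θ => (hNpos θ).ne'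
    have hinv : Continuous fun θ : ℝ => (N θ)⁻¹ := hNc.inv₀ fun θ => (hNpos θ).ne'
    rw [h, ← intervalIntegral.integral_sub (hinv.intervalIntegrable _ _)
      (hc.intervalIntegrable _ _)]
    congr 1 with θ
    field_simp
  have hbound : ∀ θ ∈ Set.Icc (-π) π, 2 * √r * (1 - Real.cos (θ / 2)) ≤ N θ := fun θ hθ => by
    have hθ2 : |θ / 2| ≤ π / 2 := by rw [abs_le]; constructor <;> linarith [hθ.1, hθ.2]
    calc 2 * √r * (1 - Real.cos (θ / 2)) ≤ 2 * √r * |Real.sin (θ / 2)| := by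
          gcongr; exact one_sub_cos_le_abs_sin hθ2
      _ = |2 * √r * Real.sin (θ / 2)| := by
          rw [abs_mul, abs_of_nonneg (by positivity : 0 ≤ 2 * √r)]
      _ ≤ N θ := hN θ ▸ Real.abs_le_sqrt (le_add_of_nonneg_left (sq_nonneg _))
  have hmem : ∀ θ ∈ Set.Icc (-π) π, (1 - Real.cos (θ / 2)) / N θ ∈ Set.Icc 0 (1 / (2 * √r)) :=
    fun θ hθ => ⟨div_nonneg (by linarith [Real.cos_le_one (θ / 2)]) (hNpos θ).le, by
      rw [div_le_div_iff₀ (hNpos θ) (by positivity)]; linarith [hbound θ hθ]⟩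
  have hint : IntervalIntegrable (fun θ => (1 - Real.cos (θ / 2)) / N θ)
      MeasureTheory.volume (-π) π :=
    Continuous.intervalIntegrable (Continuous.div (by fun_prop) hNc fun θ => (hNpos θ).ne') _ _
  rw [← hJ, hsplit]
  refine ⟨intervalIntegral.integral_nonneg (by linarith [pi_pos]) fun θ hθ => (hmem θ hθ).1, ?_⟩
  calc _ ≤ ∫ θ in (-π)..π, 1 / (2 * √r) :=
        intervalIntegral.integral_mono_on (by linarith [pi_pos]) hint intervalIntegrable_const
          fun θ hθ => (hmem θ hθ).2
    _ = π / √r := by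
        rw [intervalIntegral.integral_const, smul_eq_mul]
        field_simp
        ring

theorem arsinh_two_sqrt_div_one_sub_sub_log_mem {r : ℝ} (hr0 : 0 ≤ r) (hr1 : r < 1) :
    arsinh (2 * √r / (1 - r)) - Real.log ((1 + r) / (1 - r)) ∈ Set.Icc 0 (Real.log 2) := by
  have h1 : 0 < 1 - r := by linarith
  have hs : √r ^ 2 = r := Real.sq_sqrt hr0
  have hsq : 1 + (2 * √r / (1 - r)) ^ 2 = ((1 + r) / (1 - r)) ^ 2 := by
    field_simp
    linear_combination 4 * hs
  have hamgm : 2 * √r ≤ 1 + r := by nlinarith [sq_nonneg (√r - 1)]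
  rw [arsinh, hsq, Real.sqrt_sq (by positivity), ← Real.log_div (by positivity) (by positivity),
    show (2 * √r / (1 - r) + (1 + r) / (1 - r)) / ((1 + r) / (1 - r)) = 1 + 2 * √r / (1 + r) by
      field_simp; ring]
  refine ⟨Real.log_nonneg (by simp; positivity), Real.log_le_log (by positivity) ?_⟩
  have := div_le_one_of_le₀ hamgm (by positivity)
  linarith

theorem tendsto_log_one_add_div_one_sub :
    Tendsto (fun r : ℝ => Real.log ((1 + r) / (1 - r))) (𝓝[<] 1) atTop := by
  have h1 : Tendsto (fun r : ℝ => 1 - r) (𝓝[<] 1) (𝓝[>] 0) :=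
    tendsto_nhdsWithin_of_tendsto_nhds_of_eventually_within _
      (((continuous_sub_left (1 : ℝ)).tendsto' 1 0 (sub_self 1)).mono_left nhdsWithin_le_nhds)
      (eventually_nhdsWithin_of_forall fun r hr => sub_pos.2 (Set.mem_Iio.1 hr))
  have h2 : Tendsto (fun r : ℝ => 1 + r) (𝓝[<] 1) (𝓝 2) :=
    ((continuous_const_add (1 : ℝ)).tendsto' 1 2 one_add_one_eq_two).mono_left
      nhdsWithin_le_nhds
  exact Real.tendsto_log_atTop.comp
    ((h2.pos_mul_atTop two_pos (tendsto_inv_nhdsGT_zero.comp h1)).congr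
      fun r => (div_eq_mul_inv _ _).symm)

/-- `f_r` in the paper. -/
noncomputable def reMobiusPow (p r : ℝ) (z : ℂ) : ℝ :=
  ((((1 : ℂ) + (r : ℂ) * z) / ((1 : ℂ) - (r : ℂ) * z)) ^ ((1 / p : ℝ) : ℂ)).re

theorem abs_reMobiusPow_ofReal_rpow {p r x : ℝ} (hp : 0 < p)
    (h : 0 ≤ (1 + r * x) / (1 - r * x)) :
    |reMobiusPow p r x| ^ p = (1 + r * x) / (1 - r * x) := by
  have hcast : ((1 : ℂ) + r * x) / (1 - r * x) = (((1 + r * x) / (1 - r * x) : ℝ) : ℂ) := by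
    push_cast; rfl
  rw [reMobiusPow, hcast, abs_re_cpow_one_div_rpow _ hp, arg_ofReal_of_nonneg h, zero_div,
    Real.cos_zero, abs_one, one_rpow, mul_one, norm_real, Real.norm_of_nonneg h]

theorem integral_abs_reMobiusPow_rpow {p r : ℝ} (hp : 0 < p) (hr0 : r ≠ 0) (hr : |r| < 1) :
    ∫ x in (-1 : ℝ)..1, |reMobiusPow p r x| ^ p = 2 / r * Real.log ((1 + r) / (1 - r)) - 2 := by
  have hpos : ∀ x ∈ Set.uIcc (-1 : ℝ) 1, 0 < 1 - r * x ∧ 0 < 1 + r * x := fun x hx => by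
    rw [Set.uIcc_of_le (by norm_num)] at hx
    have : |r * x| < 1 := by
      rw [abs_mul]
      exact (mul_le_of_le_one_right (abs_nonneg r) (abs_le.2 hx)).trans_lt hr
    constructor <;> linarith [abs_lt.1 this]
  have hderiv : ∀ x ∈ Set.uIcc (-1 : ℝ) 1,
      HasDerivAt (fun x => -x - 2 / r * Real.log (1 - r * x)) ((1 + r * x) / (1 - r * x)) x :=
    fun x hx => by
    refine ((hasDerivAt_neg x).sub ((((hasDerivAt_id' x).const_mul r).const_sub 1).log
      (hpos x hx).1.ne' |>.const_mul (2 / r))).congr_deriv ?_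
    field_simp [(hpos x hx).1.ne']
    ring
  rw [intervalIntegral.integral_congr fun x hx =>
      abs_reMobiusPow_ofReal_rpow hp (div_pos (hpos x hx).2 (hpos x hx).1).le,
    intervalIntegral.integral_eq_sub_of_hasDerivAt hderiv
      (ContinuousOn.intervalIntegrable (ContinuousOn.div (by fun_prop) (by fun_prop)
        fun x hx => (hpos x hx).1.ne'))]
  obtain ⟨h1, h2⟩ := abs_lt.1 hr
  rw [Real.log_div (by linarith) (by linarith)]
  ring_nf

theorem continuous_abs_reMobiusPow_exp_rpow {p r : ℝ} (hp : 0 ≤ p) (hr : |r| < 1) :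
    Continuous fun θ : ℝ => |reMobiusPow p r (exp (θ * I))| ^ p := by
  have hu := norm_ofReal_mul_exp_mul_I_lt_one hr
  have hw : Continuous fun θ : ℝ => (1 + r * exp (θ * I)) / (1 - r * exp (θ * I)) :=
    Continuous.div (by fun_prop) (by fun_prop) fun θ => one_sub_ne_zero_of_norm_lt_one (hu θ)
  refine ((continuous_re.comp (continuous_iff_continuousAt.2 fun θ => ?_)).abs).rpow_const
    fun _ => Or.inr hp
  exact (continuousAt_cpow_const (Or.inl (re_one_add_div_one_sub_pos (hu θ)))).comp
    (f := fun θ : ℝ => (1 + r * exp (θ * I)) / (1 - r * exp (θ * I))) hw.continuousAt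

theorem abs_integral_abs_reMobiusPow_exp_rpow_sub_le {p r : ℝ} (hp : 1 ≤ p) (hr : |r| < 1) :
    |(∫ θ in (0 : ℝ)..2 * π, |reMobiusPow p r (exp (θ * I))| ^ p)
        - 2 * Real.cos (π / (2 * p)) ^ p * ∫ θ in (0 : ℝ)..2 * π, ‖1 - r * exp (θ * I)‖⁻¹|
      ≤ π ^ 2 + 2 * π * Real.cos (π / (2 * p)) ^ p := by
  set K := Real.cos (π / (2 * p)) ^ p
  have hu := norm_ofReal_mul_exp_mul_I_lt_one hr
  have hne : ∀ θ : ℝ, 1 - r * exp (θ * I) ≠ 0 := fun θ => one_sub_ne_zero_of_norm_lt_one (hu θ)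
  have hinv : Continuous fun θ : ℝ => ‖1 - r * exp (θ * I)‖⁻¹ :=
    Continuous.inv₀ (by fun_prop) fun θ => norm_ne_zero_iff.2 (hne θ)
  have hre : Continuous fun θ : ℝ => ((1 + r * exp (θ * I)) / (1 - r * exp (θ * I))).re :=
    continuous_re.comp (Continuous.div (by fun_prop) (by fun_prop) hne)
  have hq := continuous_abs_reMobiusPow_exp_rpow (p := p) (by linarith) hr
  rw [← intervalIntegral.integral_const_mul, ← intervalIntegral.integral_sub
    (hq.intervalIntegrable _ _) ((hinv.intervalIntegrable _ _).const_mul _)]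
  calc _ ≤ ∫ θ in (0 : ℝ)..2 * π,
        π / 2 * ((1 + r * exp (θ * I)) / (1 - r * exp (θ * I))).re + K := by
        refine intervalIntegral.abs_integral_le_integral_abs (by positivity) |>.trans
          (intervalIntegral.integral_mono_on (by positivity)
            ((hq.sub (continuous_const.mul hinv)).abs.intervalIntegrable _ _)
            (((continuous_const.mul hre).add continuous_const).intervalIntegrable _ _)
            fun θ _ => ?_)
        exact abs_abs_re_one_add_div_one_sub_cpow_rpow_sub_le (hu θ).le hp
    _ = π ^ 2 + 2 * π * K := by
        rw [intervalIntegral.integral_add ((hre.intervalIntegrable _ _).const_mul _)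
          intervalIntegrable_const, intervalIntegral.integral_const_mul,
          integral_re_one_add_div_one_sub_mul_exp hr, intervalIntegral.integral_const,
          smul_eq_mul]
        ring

theorem isBigO_integral_abs_reMobiusPow_rpow_sub {p : ℝ} (hp : 0 < p) :
    (fun r : ℝ => (∫ x in (-1 : ℝ)..1, |reMobiusPow p r x| ^ p)
        - 2 / r * Real.log ((1 + r) / (1 - r))) =O[𝓝[<] 1] fun _ => (1 : ℝ) := by
  refine (isBigO_const_const (-2 : ℝ) one_ne_zero _).congr' ?_ EventuallyEq.rfl
  filter_upwards [Ioo_mem_nhdsLT (zero_lt_one' ℝ)] with r hr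
  rw [integral_abs_reMobiusPow_rpow hp hr.1.ne' (abs_lt.2 ⟨by linarith [hr.1], hr.2⟩)]
  ring

theorem isBigO_integral_abs_reMobiusPow_exp_rpow_sub {p : ℝ} (hp : 1 ≤ p) :
    (fun r : ℝ => (∫ θ in (0 : ℝ)..2 * π, |reMobiusPow p r (exp (θ * I))| ^ p)
        - 4 * Real.cos (π / (2 * p)) ^ p / √r * Real.log ((1 + r) / (1 - r)))
      =O[𝓝[<] 1] fun _ => (1 : ℝ) := by
  set K := Real.cos (π / (2 * p)) ^ p
  have hK : 0 ≤ K := rpow_nonneg (cos_pi_div_two_mul_nonneg hp) _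
  set g : ℝ → ℝ := fun r => π ^ 2 + 2 * π * K + (2 * π * K + 4 * K * Real.log 2) / √r
  have hg : Tendsto g (𝓝[<] 1) (𝓝 (g 1)) :=
    (ContinuousAt.tendsto (by fun_prop (disch := norm_num))).mono_left nhdsWithin_le_nhds
  refine IsBigO.trans (IsBigO.of_bound' ?_) (hg.isBigO_one ℝ)
  filter_upwards [Ioo_mem_nhdsLT (zero_lt_one' ℝ)] with r ⟨hr0, hr1⟩
  have hs : 0 < √r := Real.sqrt_pos.2 hr0
  have e1 := abs_le.1
    (abs_integral_abs_reMobiusPow_exp_rpow_sub_le hp (abs_lt.2 ⟨by linarith, hr1⟩))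
  obtain ⟨e2, e2'⟩ := integral_inv_norm_one_sub_mul_exp_sub_mem hr0 hr1
  obtain ⟨e3, e3'⟩ := arsinh_two_sqrt_div_one_sub_sub_log_mem hr0.le hr1
  have h2 := mul_le_mul_of_nonneg_left e2' (by positivity : 0 ≤ 2 * K)
  have h3 := mul_le_mul_of_nonneg_left e3' (by positivity : 0 ≤ 4 * K / √r)
  have h2' := mul_nonneg (by positivity : 0 ≤ 2 * K) e2
  have h3' := mul_nonneg (by positivity : 0 ≤ 4 * K / √r) e3
  set II := ∫ θ in (0 : ℝ)..2 * π, ‖1 - r * exp (θ * I)‖⁻¹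
  set A := arsinh (2 * √r / (1 - r))
  have hsplit : ∀ D L : ℝ, D - 4 * K / √r * L
      = (D - 2 * K * II) + 2 * K * (II - 2 / √r * A) + 4 * K / √r * (A - L) := by
    intros; ring
  have hgr : g r = π ^ 2 + 2 * π * K + 2 * K * (π / √r) + 4 * K / √r * Real.log 2 := by
    simp only [g]; ring
  rw [Real.norm_eq_abs, Real.norm_of_nonneg (by positivity), abs_le, hsplit, hgr]
  constructor <;> linarith

/-- **Sharpness example.** With `f_r(z) = Re(((1+rz)/(1-rz))^{1/p})` (principal branch) and
`p > 1`, the ratio `(∫_{-1}^{1} |f_r(x)|^p dx) / (∫₀^{2π} |f_r(e^{iθ})|^p dθ)` tends to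
`(1/2) cos^{-p}(π/(2p))` as `r → 1⁻`. -/
theorem sharpness_ratio_limit (p : ℝ) (hp : 1 < p) :
    Tendsto (fun r : ℝ =>
        (∫ x in (-1:ℝ)..1,
          |((((1 : ℂ) + (r : ℂ) * (x : ℂ)) / ((1 : ℂ) - (r : ℂ) * (x : ℂ))) ^
              ((1 / p : ℝ) : ℂ)).re| ^ p) /
        (∫ θ in (0:ℝ)..(2 * π),
          |((((1 : ℂ) + (r : ℂ) * Complex.exp (θ * Complex.I)) /
              ((1 : ℂ) - (r : ℂ) * Complex.exp (θ * Complex.I))) ^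
              ((1 / p : ℝ) : ℂ)).re| ^ p))
      (nhdsWithin 1 (Set.Ioo 0 1))
      (nhds ((1 / 2) * (Real.cos (π / (2 * p)))⁻¹ ^ p)) := by
  have hcos := cos_pi_div_two_mul_pos hp
  set K := Real.cos (π / (2 * p)) ^ p
  have hK : 0 < K := rpow_pos_of_pos hcos p
  have hL := tendsto_log_one_add_div_one_sub
  have hid : Tendsto (fun r : ℝ => r) (𝓝[<] 1) (𝓝 1) :=
    tendsto_nhdsWithin_of_tendsto_nhds tendsto_id
  have hnum := tendsto_div_of_isBigO_sub_mul (a := fun r => 2 / r) hL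
    (by simpa [div_eq_mul_inv] using tendsto_const_nhds.mul (hid.inv₀ one_ne_zero))
    (isBigO_integral_abs_reMobiusPow_rpow_sub (p := p) (by linarith))
  have hden := tendsto_div_of_isBigO_sub_mul (a := fun r => 4 * K / √r) hL
    (by simpa [div_eq_mul_inv] using tendsto_const_nhds.mul (hid.sqrt.inv₀ (by simp)))
    (isBigO_integral_abs_reMobiusPow_exp_rpow_sub hp.le)
  have hlim : 2 / (4 * K) = 1 / 2 * (Real.cos (π / (2 * p)))⁻¹ ^ p := by
    rw [Real.inv_rpow hcos.le]; field_simp; ring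
  have hF : 𝓝[Set.Ioo 0 1] (1 : ℝ) ≤ 𝓝[<] 1 := nhdsWithin_mono _ Set.Ioo_subset_Iio_self
  rw [← hlim]
  refine ((hnum.div hden (by positivity)).mono_left hF).congr' ?_
  filter_upwards [(hL.eventually_ne_atTop 0).filter_mono hF] with r hr
  exact div_div_div_cancel_right₀ hr _ _
end
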